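/- Under the BEG measure, for i ≠ j, let f₂(x) = 2e^{-β} cosh(2βKx)/(1 + 2e^{-β} cosh(2βKx)) and S_n^{i,j} = Σ_{t∉{i,j}} ω_t. Then there is a constant c(β,K) such that, uniformly in the configuration, |E[ω_i² ω_j² | (ω_l)_{l∉{i,j}}] − f₂(S_n^{i,j}/n)²| ≤ c(β,K)/n, i.e. E[ω_i² ω_j² | (ω_l)_{l∉{i,j}}] = f₂(S_n^{i,j}/n)² · (1 + O(1/n)). -/
import Mathlib

/-- The spin values of the BEG model. -/
noncomputable def spins : Finset ℝ := {-1, 0, 1}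

/-- The (unnormalised) Gibbs weight of a configuration in the BEG model. -/
noncomputable def wBEG (n : ℕ) (β K : ℝ) (ω : Fin n → ℝ) : ℝ :=
  Real.exp (-β * ∑ j, (ω j) ^ 2 + (β * K / n) * (∑ j, ω j) ^ 2)

noncomputable def f2 (β K x : ℝ) : ℝ :=
  2 * Real.exp (-β) * Real.cosh (2 * β * K * x) /
    (1 + 2 * Real.exp (-β) * Real.cosh (2 * β * K * x))

lemma sum_upd1 {n : ℕ} (f : ℝ → ℝ) (v : Fin n → ℝ) (T : Finset (Fin n)) {k : Fin n}
    (hk : k ∈ T) (c : ℝ) :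
    ∑ l ∈ T, f (Function.update v k c l) = f c + ∑ l ∈ T.erase k, f (v l) := by
  have h : (fun l => f (Function.update v k c l)) = Function.update (fun l => f (v l)) k (f c) := by
    funext l
    rcases eq_or_ne l k with h | h
    · subst h; simp
    · simp [Function.update_of_ne h]
  rw [h, Finset.sum_update_of_mem hk, Finset.sdiff_singleton_eq_erase]

lemma sum_upd2 {n : ℕ} (f : ℝ → ℝ) (ω : Fin n → ℝ) {i j : Fin n} (hij : i ≠ j) (t s : ℝ) :
    ∑ l, f (Function.update (Function.update ω i t) j s l)
      = f t + f s + ((∑ l, f (ω l)) - f (ω i) - f (ω j)) := by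
  have hmem : i ∈ Finset.univ.erase j := Finset.mem_erase.mpr ⟨hij, Finset.mem_univ i⟩
  rw [sum_upd1 f _ _ (Finset.mem_univ j), sum_upd1 f _ _ hmem]
  have e1 : f (ω j) + ∑ l ∈ Finset.univ.erase j, f (ω l) = ∑ l, f (ω l) :=
    Finset.add_sum_erase _ (fun l => f (ω l)) (Finset.mem_univ j)
  have e2 : f (ω i) + ∑ l ∈ (Finset.univ.erase j).erase i, f (ω l)
      = ∑ l ∈ Finset.univ.erase j, f (ω l) := Finset.add_sum_erase _ (fun l => f (ω l)) hmem
  linarith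

lemma ratio_bound {N0 D0 N1 D1 E : ℝ} (hD0 : 0 < D0) (hD1 : 0 < D1) (hN0 : 0 ≤ N0)
    (h01 : N0 ≤ N1) (hNE : N1 ≤ E*N0) (hD01 : D0 ≤ D1) (hDE : D1 ≤ E*D0)
    (hND0 : N0 ≤ D0) (hND1 : N1 ≤ D1) (hE : 1 ≤ E) : |N1/D1 - N0/D0| ≤ E - 1 := by
  rw [abs_sub_le_iff]
  constructor
  · rw [div_sub_div _ _ hD1.ne' hD0.ne', div_le_iff₀ (mul_pos hD1 hD0)]
    nlinarith [mul_le_mul_of_nonneg_left hD01 hN0, mul_le_mul_of_nonneg_right hNE hD0.le,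
      mul_le_mul_of_nonneg_left hND0 (sub_nonneg.mpr hE), mul_pos hD0 hD1]
  · rw [div_sub_div _ _ hD0.ne' hD1.ne', div_le_iff₀ (mul_pos hD0 hD1)]
    nlinarith [mul_le_mul_of_nonneg_right h01 hD1.le, mul_le_mul_of_nonneg_left hDE hN0,
      mul_le_mul_of_nonneg_left hND1 (sub_nonneg.mpr hE), mul_pos hD0 hD1,
      mul_le_mul_of_nonneg_left hND0 (sub_nonneg.mpr hE)]

lemma exp_sub_one_le {y z : ℝ} (hy : 0 ≤ y) (hyz : y ≤ z) :
    Real.exp y - 1 ≤ y * Real.exp z := by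
  have h2 := Real.add_one_le_exp (-y)
  have hEpos := Real.exp_pos y
  have hme : Real.exp (-y) * Real.exp y = 1 := by
    rw [← Real.exp_add]; simp
  have h4 : Real.exp y ≤ Real.exp z := Real.exp_le_exp.mpr hyz
  nlinarith [mul_le_mul_of_nonneg_right h2 hEpos.le]

set_option maxHeartbeats 2000000 in
theorem stmt_14 (β K : ℝ) (hβ : 0 < β) (hK : 0 < K) :
    ∃ C : ℝ, ∀ (n : ℕ), 2 ≤ n → ∀ (i j : Fin n), i ≠ j →
      ∀ (ω : Fin n → ℝ), (∀ l, ω l ∈ spins) →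
        |(∑ t ∈ spins, ∑ s ∈ spins,
            t ^ 2 * s ^ 2 * wBEG n β K (Function.update (Function.update ω i t) j s)) /
          (∑ t ∈ spins, ∑ s ∈ spins,
            wBEG n β K (Function.update (Function.update ω i t) j s)) -
          (f2 β K (((∑ l, ω l) - ω i - ω j) / n)) ^ 2| ≤ C / n := by
  refine ⟨4*β*K*Real.exp (4*β*K), fun n hn i j hij ω hω => ?_⟩
  have hn0 : (0:ℝ) < n := by
    have : 0 < n := lt_of_lt_of_le (by norm_num) hn
    exact_mod_cast this
  set S : ℝ := (∑ l, ω l) - ω i - ω j with hS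
  set x : ℝ := S / n with hx
  set Q : ℝ := (∑ l, (ω l)^2) - (ω i)^2 - (ω j)^2 with hQ
  set e : ℝ → ℝ := fun t => Real.exp (-β*t^2 + 2*β*K*x*t) with he
  set h : ℝ → ℝ → ℝ := fun t s => e t * e s with hh
  set E : ℝ := Real.exp (4*β*K/n) with hE
  set g : ℝ → ℝ → ℝ := fun t s => h t s * Real.exp ((β*K/n)*(t+s)^2) with hg
  set A : ℝ := Real.exp (-β*Q + (β*K/n)*S^2) with hA
  have hw : ∀ t s : ℝ, wBEG n β K (Function.update (Function.update ω i t) j s) = A * g t s := by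
    intro t s
    rw [wBEG,
      show (∑ l, (Function.update (Function.update ω i t) j s l)^2)
        = t^2 + s^2 + ((∑ l, (ω l)^2) - (ω i)^2 - (ω j)^2) from
          sum_upd2 (fun y => y^2) ω hij t s,
      show (∑ l, Function.update (Function.update ω i t) j s l)
        = t + s + ((∑ l, ω l) - (ω i) - (ω j)) from sum_upd2 (fun y => y) ω hij t s]
    rw [hA, hg, hh, he, hQ]
    simp only [← Real.exp_add]
    congr 1
    rw [hx, hS]
    field_simp
    ring
  set N1 : ℝ := ∑ t ∈ spins, ∑ s ∈ spins, t^2*s^2 * g t s with hN1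
  set D1 : ℝ := ∑ t ∈ spins, ∑ s ∈ spins, g t s with hD1
  set N0 : ℝ := ∑ t ∈ spins, ∑ s ∈ spins, t^2*s^2 * h t s with hN0
  set D0 : ℝ := ∑ t ∈ spins, ∑ s ∈ spins, h t s with hD0
  have hAne : A ≠ 0 := (Real.exp_pos _).ne'
  have hnum : (∑ t ∈ spins, ∑ s ∈ spins,
      t ^ 2 * s ^ 2 * wBEG n β K (Function.update (Function.update ω i t) j s)) = A * N1 := by
    rw [hN1, Finset.mul_sum]
    refine Finset.sum_congr rfl fun t _ => ?_
    rw [Finset.mul_sum]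
    refine Finset.sum_congr rfl fun s _ => ?_
    rw [hw]; ring
  have hden : (∑ t ∈ spins, ∑ s ∈ spins,
      wBEG n β K (Function.update (Function.update ω i t) j s)) = A * D1 := by
    rw [hD1, Finset.mul_sum]
    refine Finset.sum_congr rfl fun t _ => ?_
    rw [Finset.mul_sum]
    refine Finset.sum_congr rfl fun s _ => ?_
    rw [hw]
  rw [hnum, hden, mul_div_mul_left _ _ hAne]
  -- f2 squared
  have hsum_e : ∑ t ∈ spins, e t = 1 + 2*Real.exp (-β)*Real.cosh (2*β*K*x) := by
    rw [show spins = {-1, 0, 1} from rfl]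
    rw [Finset.sum_insert (by norm_num), Finset.sum_insert (by norm_num), Finset.sum_singleton]
    simp only [he]
    rw [show (-β*(-1:ℝ)^2 + 2*β*K*x*(-1)) = (-β) + (-(2*β*K*x)) by ring,
      show (-β*(0:ℝ)^2 + 2*β*K*x*0) = 0 by ring,
      show (-β*(1:ℝ)^2 + 2*β*K*x*1) = (-β) + (2*β*K*x) by ring,
      Real.exp_add, Real.exp_add, Real.exp_zero, Real.cosh_eq]
    ring
  have hsum_te : ∑ t ∈ spins, t^2 * e t = 2*Real.exp (-β)*Real.cosh (2*β*K*x) := by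
    rw [show spins = {-1, 0, 1} from rfl]
    rw [Finset.sum_insert (by norm_num), Finset.sum_insert (by norm_num), Finset.sum_singleton]
    simp only [he]
    rw [show (-β*(-1:ℝ)^2 + 2*β*K*x*(-1)) = (-β) + (-(2*β*K*x)) by ring,
      show (-β*(0:ℝ)^2 + 2*β*K*x*0) = 0 by ring,
      show (-β*(1:ℝ)^2 + 2*β*K*x*1) = (-β) + (2*β*K*x) by ring,
      Real.exp_add, Real.exp_add, Real.exp_zero, Real.cosh_eq]
    ring
  have hcosh : (0:ℝ) < 1 + 2*Real.exp (-β)*Real.cosh (2*β*K*x) := by positivity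
  have hDh : D0 = (1 + 2*Real.exp (-β)*Real.cosh (2*β*K*x))^2 := by
    rw [hD0, ← hsum_e, sq, Finset.sum_mul_sum]
  have hNh : N0 = (2*Real.exp (-β)*Real.cosh (2*β*K*x))^2 := by
    rw [hN0, ← hsum_te, sq, Finset.sum_mul_sum]
    refine Finset.sum_congr rfl fun t _ => Finset.sum_congr rfl fun s _ => ?_
    ring
  have hf2 : (f2 β K x)^2 = N0 / D0 := by
    rw [f2, div_pow, hNh, hDh]
  rw [hf2]
  -- positivity facts
  have hepos : ∀ t, 0 < e t := fun t => Real.exp_pos _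
  have hgpos : ∀ t s, 0 < g t s := fun t s => mul_pos (mul_pos (hepos t) (hepos s)) (Real.exp_pos _)
  have hhpos : ∀ t s, 0 < h t s := fun t s => mul_pos (hepos t) (hepos s)
  have hspins : ∀ t : ℝ, t ∈ spins → t = -1 ∨ t = 0 ∨ t = 1 := by
    intro t ht
    simpa [spins] using ht
  have hEone : 1 ≤ E := Real.one_le_exp (by positivity)
  have hghE : ∀ t s : ℝ, t ∈ spins → s ∈ spins → h t s ≤ g t s ∧ g t s ≤ E * h t s := by
    intro t s ht hs
    have hts : (0:ℝ) ≤ (β*K/n)*(t+s)^2 ∧ (β*K/n)*(t+s)^2 ≤ 4*β*K/n := by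
      constructor
      · positivity
      · have h4 : (t+s)^2 ≤ 4 := by
          rcases hspins t ht with h'|h'|h' <;> rcases hspins s hs with h''|h''|h'' <;>
            subst h' <;> subst h'' <;> norm_num
        rw [div_mul_eq_mul_div, div_le_div_iff₀ hn0 hn0]
        nlinarith [mul_le_mul_of_nonneg_left h4 (le_of_lt (mul_pos (mul_pos hβ hK) hn0))]
    constructor
    · exact le_mul_of_one_le_right (hhpos t s).le (Real.one_le_exp hts.1)
    · calc g t s = h t s * Real.exp ((β*K/(n:ℝ))*(t+s)^2) := rfl
        _ ≤ h t s * E := mul_le_mul_of_nonneg_left (Real.exp_le_exp.mpr hts.2) (hhpos t s).le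
        _ = E * h t s := mul_comm _ _
  have hts1 : ∀ t s : ℝ, t ∈ spins → s ∈ spins → t^2*s^2 ≤ 1 ∧ 0 ≤ t^2*s^2 := by
    intro t s ht hs
    constructor
    · rcases hspins t ht with h'|h'|h' <;> rcases hspins s hs with h''|h''|h'' <;>
        subst h' <;> subst h'' <;> norm_num
    · positivity
  -- sum inequalities
  have hD0pos : 0 < D0 := by rw [hDh]; positivity
  have hN0pos : 0 ≤ N0 := Finset.sum_nonneg fun t ht => Finset.sum_nonneg fun s hs =>
    mul_nonneg (hts1 t s ht hs).2 (hhpos t s).le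
  have hD1pos : 0 < D1 := by
    rw [hD1]
    refine Finset.sum_pos (fun t ht => Finset.sum_pos (fun s hs => hgpos t s) ?_) ?_
    · exact ⟨1, by norm_num [spins]⟩
    · exact ⟨1, by norm_num [spins]⟩
  have hND0 : N0 ≤ D0 := by
    refine Finset.sum_le_sum fun t ht => Finset.sum_le_sum fun s hs => ?_
    have := mul_le_mul_of_nonneg_right (hts1 t s ht hs).1 (hhpos t s).le
    simpa using this
  have hND1 : N1 ≤ D1 := by
    refine Finset.sum_le_sum fun t ht => Finset.sum_le_sum fun s hs => ?_
    have := mul_le_mul_of_nonneg_right (hts1 t s ht hs).1 (hgpos t s).le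
    simpa using this
  have hN01 : N0 ≤ N1 := Finset.sum_le_sum fun t ht => Finset.sum_le_sum fun s hs =>
    mul_le_mul_of_nonneg_left (hghE t s ht hs).1 (hts1 t s ht hs).2
  have hN1E : N1 ≤ E * N0 := by
    rw [Finset.mul_sum]
    refine Finset.sum_le_sum fun t ht => ?_
    rw [Finset.mul_sum]
    refine Finset.sum_le_sum fun s hs => ?_
    calc t^2*s^2 * g t s ≤ t^2*s^2 * (E * h t s) :=
          mul_le_mul_of_nonneg_left (hghE t s ht hs).2 (hts1 t s ht hs).2
      _ = E * (t^2*s^2 * h t s) := by ring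
  have hD01 : D0 ≤ D1 := Finset.sum_le_sum fun t ht => Finset.sum_le_sum fun s hs =>
    (hghE t s ht hs).1
  have hD1E : D1 ≤ E * D0 := by
    rw [Finset.mul_sum]
    refine Finset.sum_le_sum fun t ht => ?_
    rw [Finset.mul_sum]
    exact Finset.sum_le_sum fun s hs => (hghE t s ht hs).2
  have hN1pos : 0 ≤ N1 := le_trans hN0pos hN01
  -- |N1/D1 - N0/D0| ≤ E - 1
  have hkey : |N1/D1 - N0/D0| ≤ E - 1 :=
    ratio_bound hD0pos hD1pos hN0pos hN01 hN1E hD01 hD1E hND0 hND1 hEone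
  refine le_trans hkey ?_
  -- E - 1 ≤ C / n
  have hy : (0:ℝ) ≤ 4*β*K/n := by positivity
  have hyle : 4*β*K/n ≤ 4*β*K := by
    rw [div_le_iff₀ hn0]
    have hn2 : (2:ℝ) ≤ (n:ℝ) := by exact_mod_cast hn
    have hbk : (0:ℝ) < β*K := mul_pos hβ hK
    nlinarith [mul_le_mul_of_nonneg_left hn2 (le_of_lt (show (0:ℝ) < 4*β*K by linarith))]
  have h3 : E - 1 ≤ (4*β*K/n) * Real.exp (4*β*K) := exp_sub_one_le hy hyle
  calc E - 1 ≤ (4*β*K/n) * Real.exp (4*β*K) := h3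
    _ = 4*β*K*Real.exp (4*β*K)/n := by ring
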